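/- arXiv:1102.1984 — 2 statements merged into one kernel-verified Lean document; each statement's English description precedes it below -/
import Mathlib

section
/- Let n ≥ 2, let α be a tight stable n-set and β a loose stable n-set in ZMod (2n+2) with |α ∩ β| ≤ n − 2. Then α and β have at most one common neighbor in SG_{n,2}; that is, there is at most one stable n-set disjoint from both α and β. -/
/-!
Common definitions: stable n-sets in `ZMod (2*n+2)`, tight/loose sets, shifts,
outer neighbors, parity, the sets `P_i`, and adjacency in the stable Kneser
graph `SG_{n,2}` (two stable n-sets are adjacent iff they are disjoint).
-/

instance (n : ℕ) : NeZero (2 * n + 2) := ⟨by omega⟩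

/-- A stable n-set: a finite subset of `ZMod (2n+2)` of cardinality `n`
containing no two (cyclically) consecutive elements. -/
def IsStable (n : ℕ) (α : Finset (ZMod (2 * n + 2))) : Prop :=
  α.card = n ∧ ∀ i : ZMod (2 * n + 2), ¬(i ∈ α ∧ i + 1 ∈ α)

/-- A set is tight if it has the form `{i, i+2, i+4, …, i+2(n-1)}`. -/
def IsTight (n : ℕ) (α : Finset (ZMod (2 * n + 2))) : Prop :=
  ∃ i : ZMod (2 * n + 2), α = (Finset.range n).image (fun k : ℕ => i + 2 * (k : ZMod (2 * n + 2)))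

/-- `α ⊕ j`, the shift of `α` by `j`. -/
def oplus (n : ℕ) (α : Finset (ZMod (2 * n + 2))) (j : ZMod (2 * n + 2)) :
    Finset (ZMod (2 * n + 2)) :=
  α.image (fun a => a + j)

/-- `α ⊖ j`, the shift of `α` by `-j`. -/
def ominus (n : ℕ) (α : Finset (ZMod (2 * n + 2))) (j : ZMod (2 * n + 2)) :
    Finset (ZMod (2 * n + 2)) :=
  α.image (fun a => a - j)

/-- `β` is an outer neighbor of `α`: they are disjoint and
`β = ((α \ {a}) ⊕ 1) ∪ {a + 2}` for some `a ∈ α`. -/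
def OuterNbr (n : ℕ) (α β : Finset (ZMod (2 * n + 2))) : Prop :=
  Disjoint α β ∧ ∃ a ∈ α, β = oplus n (α.erase a) 1 ∪ {a + 2}

/-- The parity of an element of `ZMod (2n+2)`: its image in `ZMod 2` under the
natural ring homomorphism. -/
def parity (n : ℕ) (a : ZMod (2 * n + 2)) : ZMod 2 :=
  ZMod.castHom (show (2 : ℕ) ∣ 2 * n + 2 from ⟨n + 1, by ring⟩) (ZMod 2) a

/-- Adjacency in the stable Kneser graph `SG_{n,2}`: two distinct stable n-sets
are adjacent iff they are disjoint. -/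
def SGAdj (n : ℕ) (α β : Finset (ZMod (2 * n + 2))) : Prop :=
  IsStable n α ∧ IsStable n β ∧ α ≠ β ∧ Disjoint α β

/-- `P_i`: stable n-sets with exactly `i` even elements and `n - i` odd elements. -/
def Pset (n i : ℕ) : Set (Finset (ZMod (2 * n + 2))) :=
  {α | IsStable n α ∧ (α.filter fun a => parity n a = 0).card = i ∧
       (α.filter fun a => parity n a = 1).card = n - i}

/-!
Write the tight set as `α = P \ {a}`, where `P` is the parity class of `a` (it has `n + 1`
elements), and let `Q = Pᶜ`. A common neighbor `γ` of `α` and `β` lies in `Q ∪ {a}`.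
If `a ∈ γ`, stability keeps `a ± 1` out of `γ`, which leaves exactly `n` candidates, so `γ`
is determined. Otherwise `γ = Q \ {u}`. Both kinds cannot occur together: `β` would then avoid
`a` and meet `Q` at most in `u`, so `β \ {u} ⊆ α` and `|α ∩ β| ≥ n - 1`. Two distinct
neighbors `Q \ {u₁}`, `Q \ {u₂}` are impossible too: `β` would avoid `Q`, so `β = P \ {v}`
would be tight.
-/

open Finset

lemma Finset.exists_eq_erase_of_subset {α : Type*} [DecidableEq α] {s t : Finset α}
    (h : s ⊆ t) (hcard : #s + 1 = #t) : ∃ u ∈ t, s = t.erase u := by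
  obtain ⟨u, hu, rfl⟩ := exists_eq_insert_iff.2 ⟨h, hcard⟩
  exact ⟨u, mem_insert_self u s, (erase_insert hu).symm⟩

lemma Finset.disjoint_of_disjoint_erase {α : Type*} [DecidableEq α] {s t : Finset α} {u v : α}
    (hu : Disjoint s (t.erase u)) (hv : Disjoint s (t.erase v)) (huv : u ≠ v) : Disjoint s t := by
  rw [disjoint_right]
  intro x hxt hxs
  have hxu : x = u := by_contra fun h => disjoint_left.1 hu hxs (mem_erase.2 ⟨h, hxt⟩)
  have hxv : x = v := by_contra fun h => disjoint_left.1 hv hxs (mem_erase.2 ⟨h, hxt⟩)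
  exact huv (hxu ▸ hxv)

section Parity

variable {n : ℕ}

lemma parity_two : parity n 2 = 0 := by
  rw [parity, map_ofNat]
  decide

lemma parity_two_mul (y : ZMod (2 * n + 2)) : parity n (2 * y) = 0 := by
  have h : parity n (2 * y) = parity n 2 * parity n y := map_mul _ 2 y
  rw [h, parity_two, zero_mul]

lemma parity_add (x y : ZMod (2 * n + 2)) : parity n (x + y) = parity n x + parity n y :=
  map_add _ x y

lemma parity_sub (x y : ZMod (2 * n + 2)) : parity n (x - y) = parity n x - parity n y :=
  map_sub _ x y

lemma parity_one : parity n 1 = 1 :=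
  map_one _

lemma parity_eq_zero_iff (x : ZMod (2 * n + 2)) : parity n x = 0 ↔ Even x.val := by
  rw [parity, ZMod.castHom_apply, ← ZMod.natCast_val, ZMod.natCast_eq_zero_iff, even_iff_two_dvd]

def parityClass (n : ℕ) (a : ZMod (2 * n + 2)) : Finset (ZMod (2 * n + 2)) :=
  univ.filter fun x => parity n x = parity n a

variable {a x : ZMod (2 * n + 2)}

@[simp]
lemma mem_parityClass : x ∈ parityClass n a ↔ parity n x = parity n a := by
  simp [parityClass]

lemma parityClass_eq_of_mem (h : x ∈ parityClass n a) : parityClass n x = parityClass n a := by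
  ext y
  rw [mem_parityClass, mem_parityClass, mem_parityClass.1 h]

lemma add_one_notMem_parityClass : a + 1 ∉ parityClass n a := by
  rw [mem_parityClass, parity_add, parity_one]
  generalize parity n a = p
  revert p; decide

lemma sub_one_notMem_parityClass : a - 1 ∉ parityClass n a := by
  rw [mem_parityClass, parity_sub, parity_one]
  generalize parity n a = p
  revert p; decide

lemma compl_parityClass (a : ZMod (2 * n + 2)) :
    (parityClass n a)ᶜ = (parityClass n a).map (Equiv.addRight 1).toEmbedding := by
  ext x
  simp only [mem_compl, mem_map_equiv, Equiv.addRight_symm, Equiv.coe_addRight, mem_parityClass,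
    ← sub_eq_add_neg, parity_sub, parity_one]
  generalize parity n x = p
  generalize parity n a = q
  revert p q; decide

lemma card_parityClass (a : ZMod (2 * n + 2)) : #(parityClass n a) = n + 1 := by
  have h := card_add_card_compl (parityClass n a)
  rw [compl_parityClass, card_map, ZMod.card] at h
  omega

lemma tight_eq_parityClass_erase (i : ZMod (2 * n + 2)) :
    (range n).image (fun k : ℕ => i + 2 * (k : ZMod (2 * n + 2))) =
      (parityClass n (i - 2)).erase (i - 2) := by
  have h2n : (2 * n : ZMod (2 * n + 2)) = -2 := by
    rw [eq_neg_iff_add_eq_zero]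
    exact_mod_cast ZMod.natCast_self (2 * n + 2)
  ext x
  simp only [mem_image, mem_range, mem_erase, mem_parityClass, parity_sub,
    parity_two, sub_zero]
  constructor
  · rintro ⟨k, hk, rfl⟩
    refine ⟨fun h => ?_, ?_⟩
    · have h0 : ((2 * k + 2 : ℕ) : ZMod (2 * n + 2)) = 0 := by
        push_cast
        linear_combination h
      have := Nat.le_of_dvd (by omega) ((ZMod.natCast_eq_zero_iff _ _).1 h0)
      omega
    · rw [parity_add, parity_two_mul, add_zero]
  · rintro ⟨hne, hpar⟩
    obtain ⟨k, hk⟩ := (parity_eq_zero_iff (x - i)).1 (by rw [parity_sub, hpar, sub_self])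
    have hlt := ZMod.val_lt (x - i)
    have hx : x = i + 2 * (k : ZMod (2 * n + 2)) := by
      have h := ZMod.natCast_zmod_val (x - i)
      rw [hk] at h
      push_cast at h
      linear_combination -h
    refine ⟨k, ?_, hx.symm⟩
    by_contra hkn
    obtain rfl : k = n := by omega
    exact hne (by rw [hx, h2n]; ring)

lemma isTight_iff {α : Finset (ZMod (2 * n + 2))} :
    IsTight n α ↔ ∃ a, α = (parityClass n a).erase a := by
  simp only [IsTight, tight_eq_parityClass_erase]
  exact ⟨fun ⟨i, h⟩ => ⟨i - 2, h⟩, fun ⟨a, h⟩ => ⟨a + 2, by rwa [add_sub_cancel_right]⟩⟩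

end Parity

section CommonNeighbors

variable {n : ℕ} {a : ZMod (2 * n + 2)} {β γ : Finset (ZMod (2 * n + 2))}

lemma eq_compl_sdiff_of_mem (hn : 1 ≤ n) (hγ : IsStable n γ)
    (hdisj : Disjoint ((parityClass n a).erase a) γ) (ha : a ∈ γ) :
    γ = ((parityClass n a).erase a)ᶜ \ {a - 1, a + 1} := by
  have hsub : γ ⊆ ((parityClass n a).erase a)ᶜ \ {a - 1, a + 1} := by
    intro x hx
    simp only [mem_sdiff, mem_compl, mem_insert, mem_singleton, not_or]
    refine ⟨disjoint_right.1 hdisj hx, ?_, ?_⟩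
    · rintro rfl
      exact hγ.2 _ ⟨hx, by rwa [sub_add_cancel]⟩
    · rintro rfl
      exact hγ.2 _ ⟨ha, hx⟩
  have hpair : {a - 1, a + 1} ⊆ ((parityClass n a).erase a)ᶜ := by
    simp only [insert_subset_iff, singleton_subset_iff, mem_compl, mem_erase, not_and_or]
    exact ⟨Or.inr sub_one_notMem_parityClass, Or.inr add_one_notMem_parityClass⟩
  have hne : a - 1 ≠ a + 1 := by
    intro h
    have h2 : ((2 : ℕ) : ZMod (2 * n + 2)) = 0 := by
      push_cast
      linear_combination -h
    have := Nat.le_of_dvd two_pos ((ZMod.natCast_eq_zero_iff _ _).1 h2)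
    omega
  refine eq_of_subset_of_card_le hsub ?_
  rw [card_sdiff_of_subset hpair, card_pair hne, card_compl,
    card_erase_of_mem (mem_parityClass.2 rfl), card_parityClass, ZMod.card, hγ.1]
  omega

lemma exists_eq_compl_erase_of_notMem (hγ : #γ = n)
    (hdisj : Disjoint ((parityClass n a).erase a) γ) (ha : a ∉ γ) :
    ∃ u ∈ (parityClass n a)ᶜ, γ = (parityClass n a)ᶜ.erase u := by
  refine exists_eq_erase_of_subset (fun x hx => mem_compl.2 fun hxP => ?_) ?_
  · exact disjoint_right.1 hdisj hx (mem_erase.2 ⟨ne_of_mem_of_not_mem hx ha, hxP⟩)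
  · rw [card_compl, card_parityClass, ZMod.card, hγ]
    omega

lemma card_pred_le_card_erase_inter {u : ZMod (2 * n + 2)} (hβa : a ∉ β)
    (hβu : Disjoint β ((parityClass n a)ᶜ.erase u)) :
    #β - 1 ≤ #((parityClass n a).erase a ∩ β) := by
  refine (pred_card_le_card_erase (a := u)).trans (card_le_card fun x hx => ?_)
  obtain ⟨hxu, hxβ⟩ := mem_erase.1 hx
  have hxP : x ∈ parityClass n a := by
    by_contra h
    exact disjoint_left.1 hβu hxβ (mem_erase.2 ⟨hxu, mem_compl.2 h⟩)
  exact mem_inter.2 ⟨mem_erase.2 ⟨ne_of_mem_of_not_mem hxβ hβa, hxP⟩, hxβ⟩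

end CommonNeighbors

theorem tight_loose_small_inter_common_neighbors_general (n : ℕ) (hn : 2 ≤ n)
    (α β : Finset (ZMod (2 * n + 2)))
    (hαt : IsTight n α)
    (hβ : IsStable n β) (hβl : ¬ IsTight n β)
    (hcap : (α ∩ β).card ≤ n - 2) :
    {γ : Finset (ZMod (2 * n + 2)) |
      IsStable n γ ∧ Disjoint α γ ∧ Disjoint β γ}.ncard ≤ 1 := by
  obtain ⟨a, rfl⟩ := isTight_iff.1 hαt
  have no_mixed : ∀ {γ γ'}, a ∈ γ → Disjoint β γ → IsStable n γ' →
      Disjoint ((parityClass n a).erase a) γ' → Disjoint β γ' → a ∉ γ' → False := by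
    intro γ γ' ha hβγ hγ' hαγ' hβγ' ha'
    obtain ⟨u, -, rfl⟩ := exists_eq_compl_erase_of_notMem hγ'.1 hαγ' ha'
    have := card_pred_le_card_erase_inter (disjoint_right.1 hβγ ha) hβγ'
    rw [hβ.1] at this
    omega
  rw [Set.ncard_le_one_iff]
  rintro γ₁ γ₂ ⟨hγ₁, hαγ₁, hβγ₁⟩ ⟨hγ₂, hαγ₂, hβγ₂⟩
  by_cases ha₁ : a ∈ γ₁ <;> by_cases ha₂ : a ∈ γ₂
  · rw [eq_compl_sdiff_of_mem (by omega) hγ₁ hαγ₁ ha₁,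
      eq_compl_sdiff_of_mem (by omega) hγ₂ hαγ₂ ha₂]
  · exact (no_mixed ha₁ hβγ₁ hγ₂ hαγ₂ hβγ₂ ha₂).elim
  · exact (no_mixed ha₂ hβγ₂ hγ₁ hαγ₁ hβγ₁ ha₁).elim
  · obtain ⟨u₁, -, rfl⟩ := exists_eq_compl_erase_of_notMem hγ₁.1 hαγ₁ ha₁
    obtain ⟨u₂, -, rfl⟩ := exists_eq_compl_erase_of_notMem hγ₂.1 hαγ₂ ha₂
    by_contra hne
    have hβP : β ⊆ parityClass n a :=
      disjoint_compl_right_iff.1 (disjoint_of_disjoint_erase hβγ₁ hβγ₂ fun h => hne (h ▸ rfl))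
    obtain ⟨v, hv, rfl⟩ := exists_eq_erase_of_subset hβP (by rw [hβ.1, card_parityClass])
    exact hβl (isTight_iff.2 ⟨v, by rw [parityClass_eq_of_mem hv]⟩)

/-- A tight stable n-set `α` and a loose stable n-set `β` with `|α ∩ β| ≤ n - 2`
have at most one common neighbor in `SG_{n,2}`. -/
theorem tight_loose_small_inter_common_neighbors (n : ℕ) (hn : 2 ≤ n)
    (α β : Finset (ZMod (2 * n + 2)))
    (hα : IsStable n α) (hαt : IsTight n α)
    (hβ : IsStable n β) (hβl : ¬ IsTight n β)
    (hcap : (α ∩ β).card ≤ n - 2) :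
    {γ : Finset (ZMod (2 * n + 2)) |
      IsStable n γ ∧ Disjoint α γ ∧ Disjoint β γ}.ncard ≤ 1 :=
  tight_loose_small_inter_common_neighbors_general n hn α β hαt hβ hβl hcap
end

section
/- Let n ≥ 2, let α be a tight stable n-set and β a loose stable n-set in ZMod (2n+2) with |α ∩ β| = n − 1. Then α and β have exactly two common neighbors in SG_{n,2}: one of them is a tight stable n-set whose elements have parity opposite to that of the elements of α and which is an outer neighbor of β, and the other is a loose stable n-set which is an immediate neighbor of β (i.e. equals β ⊕ 1 or β ⊖ 1). -/
/-!
Measure every element by its offset `(x - i).val` from the start `i` of the tight set `α`, so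
that `α` consists of the even offsets below `2n`. Swapping one element `a ∈ α` for `b ∉ α` gives
a stable loose set only if `b` has odd offset next to the free even offset `2n`, i.e. the offsets
of `(a, b)` are `(0, 2n+1)` or `(2n-2, 2n-1)`. A common neighbour avoids `α ∪ {b}`, whose
complement consists of `2n` and the `n` odd offsets other than that of `b`. If it omits `2n` it
is the tight set of those odd offsets; if it contains `2n`, stability removes `2n ± 1`, which
leaves exactly `n` candidates, and they form an immediate neighbour of `β`.
-/

open Finset

theorem exists_eq_insert_erase_of_card_inter {ι : Type*} [DecidableEq ι] {s t : Finset ι}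
    (hcard : t.card = s.card) (hinter : (s ∩ t).card + 1 = s.card) :
    ∃ a ∈ s, ∃ b ∉ s, t = insert b (s.erase a) := by
  have hst : (s \ t).card = 1 := by
    have := card_sdiff_add_card_inter s t
    omega
  have hts : (t \ s).card = 1 := by
    have := card_sdiff_add_card_inter t s
    rw [inter_comm] at this
    omega
  obtain ⟨a, ha⟩ := card_eq_one.mp hst
  obtain ⟨b, hb⟩ := card_eq_one.mp hts
  simp only [Finset.ext_iff, mem_sdiff, mem_singleton] at ha hb
  refine ⟨a, ((ha a).mpr rfl).1, b, ((hb b).mpr rfl).2, ?_⟩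
  ext x
  have := ha x
  have := hb x
  simp only [mem_insert, mem_erase]
  tauto

section Offsets

variable {m : ℕ} [NeZero m]

theorem val_sub_inj {x y : ZMod m} (i : ZMod m) : (x - i).val = (y - i).val ↔ x = y :=
  (ZMod.val_injective m).eq_iff.trans sub_left_inj

theorem val_sub_eq_iff_eq_add {x i : ZMod m} {k : ℕ} (hk : k < m) :
    (x - i).val = k ↔ x = i + k := by
  constructor
  · intro h
    rw [← h, ZMod.natCast_zmod_val]
    ring
  · rintro rfl
    rw [add_sub_cancel_left, ZMod.val_natCast_of_lt hk]

theorem val_add_one_sub (hm : 1 < m) (x i : ZMod m) :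
    (x + 1 - i).val = (x - i).val + 1 ∨ (x + 1 - i).val + m = (x - i).val + 1 := by
  have h1 : (1 : ZMod m).val = 1 := ZMod.val_one'' (by omega)
  rw [add_sub_right_comm]
  rcases lt_or_ge ((x - i).val + (1 : ZMod m).val) m with h | h
  · left
    rw [ZMod.val_add_of_lt h, h1]
  · right
    have := ZMod.val_add_val_of_le h
    omega

end Offsets

section StableSets

variable {n : ℕ}

theorem parity_eq_add_val_sub (i x : ZMod (2 * n + 2)) :
    parity n x = parity n i + ((x - i).val : ZMod 2) := by
  conv_lhs => rw [show x = i + ((x - i).val : ZMod (2 * n + 2)) by rw [ZMod.natCast_zmod_val]; ring]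
  simp only [parity, map_add, map_natCast]

theorem parity_eq_parity_iff (i x y : ZMod (2 * n + 2)) :
    parity n x = parity n y ↔ (x - i).val % 2 = (y - i).val % 2 := by
  rw [parity_eq_add_val_sub i x, parity_eq_add_val_sub i y, add_right_inj,
    ZMod.natCast_eq_natCast_iff']

theorem parity_ne_of_val_sub_mod_two {i b : ZMod (2 * n + 2)} (h : (b - i).val % 2 = 1) :
    parity n b ≠ parity n i := by
  rw [Ne, parity_eq_parity_iff i, sub_self, ZMod.val_zero]
  omega

theorem parity_add_two (x : ZMod (2 * n + 2)) : parity n (x + 2) = parity n x := by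
  simp only [parity, map_add, map_ofNat]
  exact add_eq_left.mpr rfl

def tightSet (n : ℕ) (s : ZMod (2 * n + 2)) : Finset (ZMod (2 * n + 2)) :=
  (range n).image fun k : ℕ => s + 2 * (k : ZMod (2 * n + 2))

theorem val_two_mul_natCast {k : ℕ} (hk : k ≤ n) : (2 * (k : ZMod (2 * n + 2))).val = 2 * k := by
  rw [show (2 : ZMod (2 * n + 2)) * k = ((2 * k : ℕ) : ZMod (2 * n + 2)) by push_cast; ring,
    ZMod.val_natCast_of_lt (by omega)]

theorem mem_tightSet_iff_val {s x : ZMod (2 * n + 2)} :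
    x ∈ tightSet n s ↔ (x - s).val % 2 = 0 ∧ (x - s).val < 2 * n := by
  simp only [tightSet, mem_image, mem_range]
  constructor
  · rintro ⟨k, hk, rfl⟩
    rw [add_sub_cancel_left, val_two_mul_natCast hk.le]
    omega
  · rintro ⟨heven, hlt⟩
    obtain ⟨k, hk⟩ := Nat.dvd_of_mod_eq_zero heven
    refine ⟨k, by omega, ?_⟩
    rw [show (2 : ZMod (2 * n + 2)) * k = ((2 * k : ℕ) : ZMod (2 * n + 2)) by push_cast; ring,
      ← hk, ZMod.natCast_zmod_val]
    ring

theorem mem_tightSet_iff {s x : ZMod (2 * n + 2)} :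
    x ∈ tightSet n s ↔ parity n x = parity n s ∧ x ≠ s - 2 := by
  have hwrap : s - 2 = s + ((2 * n : ℕ) : ZMod (2 * n + 2)) := by
    have := ZMod.natCast_self (2 * n + 2)
    push_cast at this ⊢
    linear_combination -this
  rw [mem_tightSet_iff_val, parity_eq_parity_iff s, sub_self, ZMod.val_zero, hwrap, ne_eq,
    ← val_sub_eq_iff_eq_add (by omega)]
  have := (x - s).val_lt
  omega

theorem card_tightSet (s : ZMod (2 * n + 2)) : (tightSet n s).card = n := by
  rw [tightSet, card_image_of_injOn, card_range]
  intro k hk k' hk' h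
  simp only [coe_range, Set.mem_Iio] at hk hk'
  have := congrArg (fun x => (x - s).val) h
  simp only [add_sub_cancel_left, val_two_mul_natCast hk.le, val_two_mul_natCast hk'.le] at this
  omega

theorem isStable_tightSet (s : ZMod (2 * n + 2)) : IsStable n (tightSet n s) := by
  refine ⟨card_tightSet s, fun x ⟨hx, hx₁⟩ => ?_⟩
  rw [mem_tightSet_iff_val] at hx hx₁
  have := val_add_one_sub (by omega) x s
  omega

theorem disjoint_tightSet_of_parity_ne {s t : ZMod (2 * n + 2)} (h : parity n s ≠ parity n t) :
    Disjoint (tightSet n s) (tightSet n t) :=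
  disjoint_left.mpr fun _ hs ht =>
    h ((mem_tightSet_iff.mp hs).1.symm.trans (mem_tightSet_iff.mp ht).1)

theorem mem_tightSet_add_two_iff (i : ZMod (2 * n + 2)) {b x : ZMod (2 * n + 2)} :
    x ∈ tightSet n (b + 2) ↔ (x - i).val % 2 = (b - i).val % 2 ∧ (x - i).val ≠ (b - i).val := by
  rw [mem_tightSet_iff, parity_add_two, add_sub_cancel_right, parity_eq_parity_iff i, ne_eq, ne_eq,
    val_sub_inj]

theorem mem_oplus {S : Finset (ZMod (2 * n + 2))} {j x : ZMod (2 * n + 2)} :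
    x ∈ oplus n S j ↔ x - j ∈ S := by
  simp only [oplus, mem_image]
  constructor
  · rintro ⟨a, ha, rfl⟩
    rwa [add_sub_cancel_right]
  · exact fun h => ⟨x - j, h, sub_add_cancel x j⟩

theorem ominus_eq_oplus_neg (S : Finset (ZMod (2 * n + 2))) (j : ZMod (2 * n + 2)) :
    ominus n S j = oplus n S (-j) := by
  simp only [ominus, oplus, sub_eq_add_neg]

theorem IsStable.oplus {S : Finset (ZMod (2 * n + 2))} (hS : IsStable n S) (j : ZMod (2 * n + 2)) :
    IsStable n (oplus n S j) := by
  refine ⟨(card_image_of_injective _ (add_left_injective j)).trans hS.1, fun x ⟨hx, hx₁⟩ => ?_⟩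
  rw [mem_oplus] at hx hx₁
  exact hS.2 (x - j) ⟨hx, by rwa [sub_add_eq_add_sub]⟩

theorem oplus_tightSet (s j : ZMod (2 * n + 2)) :
    oplus n (tightSet n s) j = tightSet n (s + j) := by
  simp only [oplus, tightSet, image_image]
  congr 1
  funext k
  simp only [Function.comp_apply]
  ring

theorem oplus_oplus_neg (S : Finset (ZMod (2 * n + 2))) (j : ZMod (2 * n + 2)) :
    oplus n (oplus n S j) (-j) = S := by
  simp only [oplus, image_image, Function.comp_def, add_neg_cancel_right, image_id']

theorem IsTight.of_oplus {S : Finset (ZMod (2 * n + 2))} {j : ZMod (2 * n + 2)}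
    (h : IsTight n (oplus n S j)) : IsTight n S := by
  obtain ⟨s, hs⟩ : ∃ s, oplus n S j = tightSet n s := h
  exact ⟨s + -j, by rw [← oplus_oplus_neg S j, hs, oplus_tightSet]; rfl⟩

theorem exists_eq_oplus_of_immediate {S γ : Finset (ZMod (2 * n + 2))}
    (h : γ = oplus n S 1 ∨ γ = ominus n S 1) : ∃ j, γ = oplus n S j := by
  rcases h with h | h
  · exact ⟨1, h⟩
  · exact ⟨-1, h.trans (ominus_eq_oplus_neg S 1)⟩

section Swap

variable {i a b : ZMod (2 * n + 2)}

theorem mem_insert_erase_tightSet_iff {x : ZMod (2 * n + 2)} :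
    x ∈ insert b ((tightSet n i).erase a) ↔
      ((x - i).val % 2 = 0 ∧ (x - i).val < 2 * n ∧ (x - i).val ≠ (a - i).val) ∨
        (x - i).val = (b - i).val := by
  rw [mem_insert, mem_erase, mem_tightSet_iff_val, ne_eq, ← val_sub_inj i, ← val_sub_inj i]
  tauto

theorem val_sub_of_isStable_of_not_isTight (ha : a ∈ tightSet n i) (hb : b ∉ tightSet n i)
    (hβ : IsStable n (insert b ((tightSet n i).erase a)))
    (hβl : ¬ IsTight n (insert b ((tightSet n i).erase a))) :
    (a - i).val = 0 ∧ (b - i).val = 2 * n + 1 ∨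
      (a - i).val + 2 = 2 * n ∧ (b - i).val + 1 = 2 * n := by
  rw [mem_tightSet_iff_val] at ha hb
  have hb_lt := (b - i).val_lt
  have hb_odd : (b - i).val % 2 = 1 := by
    -- an even offset of `b` can only be `2n`, and then `β` is the tight set starting at `a + 2`
    by_contra h
    refine hβl ⟨a + 2, ?_⟩
    change _ = tightSet n (a + 2)
    ext x
    rw [mem_insert_erase_tightSet_iff, mem_tightSet_add_two_iff i]
    have := (x - i).val_lt
    constructor <;> intro <;> omega
  have hnext : b + 1 ∉ insert b ((tightSet n i).erase a) :=
    fun h => hβ.2 b ⟨mem_insert_self _ _, h⟩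
  have hprev : b - 1 ∉ insert b ((tightSet n i).erase a) :=
    fun h => hβ.2 (b - 1) ⟨h, by rw [sub_add_cancel]; exact mem_insert_self _ _⟩
  rw [mem_insert_erase_tightSet_iff] at hnext hprev
  have := val_add_one_sub (by omega) b i
  have := val_add_one_sub (by omega) (b - 1) i
  rw [sub_add_cancel] at this
  have := (b + 1 - i).val_lt
  have := (b - 1 - i).val_lt
  omega

theorem exists_immediate_nbr_mem_iff
    (hab : (a - i).val = 0 ∧ (b - i).val = 2 * n + 1 ∨
      (a - i).val + 2 = 2 * n ∧ (b - i).val + 1 = 2 * n) :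
    ∃ γ, (γ = oplus n (insert b ((tightSet n i).erase a)) 1 ∨
        γ = ominus n (insert b ((tightSet n i).erase a)) 1) ∧
      ∀ x, x ∈ γ ↔ (x - i).val = 2 * n ∨ ((x - i).val % 2 = 1 ∧ (x - i).val + 2 < 2 * n) := by
  rcases hab with hab | hab
  · refine ⟨_, Or.inr rfl, fun x => ?_⟩
    rw [ominus_eq_oplus_neg, mem_oplus, sub_neg_eq_add, mem_insert_erase_tightSet_iff]
    have := val_add_one_sub (by omega) x i
    have := (x - i).val_lt
    have := (x + 1 - i).val_lt
    constructor <;> intro <;> omega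
  · refine ⟨_, Or.inl rfl, fun x => ?_⟩
    rw [mem_oplus, mem_insert_erase_tightSet_iff]
    have := val_add_one_sub (by omega) (x - 1) i
    rw [sub_add_cancel] at this
    have := (x - i).val_lt
    have := (x - 1 - i).val_lt
    constructor <;> intro <;> omega

theorem eq_or_eq_of_isStable_of_disjoint {γ γ₂ : Finset (ZMod (2 * n + 2))}
    (hb : (b - i).val % 2 = 1)
    (hγ₂ : ∀ x, x ∈ γ₂ ↔ (x - i).val = 2 * n ∨ ((x - i).val % 2 = 1 ∧ (x - i).val + 2 < 2 * n))
    (hγ₂card : γ₂.card = n) (hγ : IsStable n γ) (hαγ : Disjoint (tightSet n i) γ) (hbγ : b ∉ γ) :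
    γ = tightSet n (b + 2) ∨ γ = γ₂ := by
  set c := i + ((2 * n : ℕ) : ZMod (2 * n + 2))
  have hc : (c - i).val = 2 * n := (val_sub_eq_iff_eq_add (by omega)).mpr rfl
  have hout : ∀ x ∈ γ, (x - i).val % 2 = 1 ∨ (x - i).val = 2 * n := fun x hx => by
    have := disjoint_right.mp hαγ hx
    rw [mem_tightSet_iff_val] at this
    have := (x - i).val_lt
    omega
  by_cases hcγ : c ∈ γ
  · right
    have hnext : c + 1 ∉ γ := fun h => hγ.2 c ⟨hcγ, h⟩
    have hprev : c - 1 ∉ γ := fun h => hγ.2 (c - 1) ⟨h, by rwa [sub_add_cancel]⟩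
    have h_next := val_add_one_sub (by omega) c i
    have h_prev := val_add_one_sub (by omega) (c - 1) i
    rw [sub_add_cancel] at h_prev
    refine eq_of_subset_of_card_le (fun x hx => ?_) (by rw [hγ₂card, hγ.1])
    have hx_next := ne_of_mem_of_not_mem hx hnext
    have hx_prev := ne_of_mem_of_not_mem hx hprev
    rw [ne_eq, ← val_sub_inj i] at hx_next hx_prev
    rw [hγ₂]
    have := hout x hx
    have := (x - i).val_lt
    have := (c + 1 - i).val_lt
    have := (c - 1 - i).val_lt
    omega
  · left
    refine eq_of_subset_of_card_le (fun x hx => ?_) (by rw [card_tightSet, hγ.1])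
    have hxc := ne_of_mem_of_not_mem hx hcγ
    have hxb := ne_of_mem_of_not_mem hx hbγ
    rw [ne_eq, ← val_sub_inj i] at hxc hxb
    rw [mem_tightSet_add_two_iff i]
    have := hout x hx
    omega

theorem disjoint_tightSet_tightSet_add_two (hb : (b - i).val % 2 = 1) :
    Disjoint (tightSet n i) (tightSet n (b + 2)) :=
  disjoint_tightSet_of_parity_ne <| by
    rw [parity_add_two]
    exact (parity_ne_of_val_sub_mod_two hb).symm

theorem disjoint_insert_erase_tightSet_add_two (hb : (b - i).val % 2 = 1) :
    Disjoint (insert b ((tightSet n i).erase a)) (tightSet n (b + 2)) :=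
  disjoint_insert_left.mpr ⟨fun h => (mem_tightSet_iff.mp h).2 (add_sub_cancel_right b 2).symm,
    (disjoint_tightSet_tightSet_add_two hb).mono_left (erase_subset _ _)⟩

theorem commonNbrs_eq {γ₂ : Finset (ZMod (2 * n + 2))}
    (hb : (b - i).val + 1 = 2 * n ∨ (b - i).val = 2 * n + 1)
    (hγ₂ : ∀ x, x ∈ γ₂ ↔ (x - i).val = 2 * n ∨ ((x - i).val % 2 = 1 ∧ (x - i).val + 2 < 2 * n))
    (hγ₂s : IsStable n γ₂) :
    {γ | IsStable n γ ∧ Disjoint (tightSet n i) γ ∧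
      Disjoint (insert b ((tightSet n i).erase a)) γ} = {tightSet n (b + 2), γ₂} := by
  have hb_odd : (b - i).val % 2 = 1 := by omega
  ext γ
  simp only [Set.mem_ofPred_eq, Set.mem_insert_iff, Set.mem_singleton_iff]
  constructor
  · rintro ⟨hγ, hαγ, hβγ⟩
    exact eq_or_eq_of_isStable_of_disjoint hb_odd hγ₂ hγ₂s.1 hγ hαγ (disjoint_insert_left.mp hβγ).1
  · rintro (rfl | rfl)
    · exact ⟨isStable_tightSet _, disjoint_tightSet_tightSet_add_two hb_odd,
        disjoint_insert_erase_tightSet_add_two hb_odd⟩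
    · have hαγ₂ : Disjoint (tightSet n i) γ := disjoint_left.mpr fun x hx hx₂ => by
        rw [mem_tightSet_iff_val] at hx
        rw [hγ₂] at hx₂
        omega
      have hbγ₂ : b ∉ γ := by
        rw [hγ₂]
        omega
      exact ⟨hγ₂s, hαγ₂, disjoint_insert_left.mpr ⟨hbγ₂, hαγ₂.mono_left (erase_subset _ _)⟩⟩

theorem outerNbr_tightSet_add_two (hn : 0 < n)
    (hab : (a - i).val = 0 ∧ (b - i).val = 2 * n + 1 ∨
      (a - i).val + 2 = 2 * n ∧ (b - i).val + 1 = 2 * n) :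
    OuterNbr n (insert b ((tightSet n i).erase a)) (tightSet n (b + 2)) := by
  have hb_odd : (b - i).val % 2 = 1 := by omega
  have hbα : b ∉ (tightSet n i).erase a := by
    rw [mem_erase, mem_tightSet_iff_val]
    omega
  refine ⟨disjoint_insert_erase_tightSet_add_two hb_odd, b, mem_insert_self _ _, ?_⟩
  rw [erase_insert hbα]
  ext x
  rw [mem_tightSet_add_two_iff i, mem_union, mem_oplus, mem_erase, mem_tightSet_iff_val,
    mem_singleton]
  simp only [ne_eq, ← val_sub_inj i]
  have h_prev := val_add_one_sub (by omega) (x - 1) i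
  rw [sub_add_cancel] at h_prev
  have h_one := val_add_one_sub (by omega) b i
  have h_two := val_add_one_sub (by omega) (b + 1) i
  rw [add_assoc, one_add_one_eq_two] at h_two
  have := (x - i).val_lt
  have := (x - 1 - i).val_lt
  have := (b + 1 - i).val_lt
  have := (b + 2 - i).val_lt
  constructor <;> intro <;> omega

end Swap

end StableSets

/-- A tight stable n-set `α` and a loose stable n-set `β` with `|α ∩ β| = n - 1`
have exactly two common neighbors in `SG_{n,2}`: a tight one of parity opposite
to `α` which is an outer neighbor of `β`, and a loose one which is an immediate
neighbor of `β`. -/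
theorem tight_loose_large_inter_common_neighbors (n : ℕ) (hn : 2 ≤ n)
    (α β : Finset (ZMod (2 * n + 2)))
    (hα : IsStable n α) (hαt : IsTight n α)
    (hβ : IsStable n β) (hβl : ¬ IsTight n β)
    (hcap : (α ∩ β).card = n - 1) :
    ∃ γ₁ γ₂ : Finset (ZMod (2 * n + 2)), γ₁ ≠ γ₂ ∧
      {γ : Finset (ZMod (2 * n + 2)) |
        IsStable n γ ∧ Disjoint α γ ∧ Disjoint β γ} = {γ₁, γ₂} ∧
      IsStable n γ₁ ∧ IsTight n γ₁ ∧
      (∀ c ∈ γ₁, ∀ a ∈ α, parity n c ≠ parity n a) ∧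
      OuterNbr n β γ₁ ∧
      IsStable n γ₂ ∧ ¬ IsTight n γ₂ ∧
      (γ₂ = oplus n β 1 ∨ γ₂ = ominus n β 1) := by
  obtain ⟨i, rfl⟩ : ∃ i, α = tightSet n i := hαt
  obtain ⟨a, ha, b, hb, rfl⟩ :=
    exists_eq_insert_erase_of_card_inter (hβ.1.trans hα.1.symm) (by rw [hcap, hα.1]; omega)
  have hab := val_sub_of_isStable_of_not_isTight ha hb hβ hβl
  have hb_odd : (b - i).val % 2 = 1 := by omega
  obtain ⟨γ₂, hshift, hγ₂⟩ := exists_immediate_nbr_mem_iff hab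
  obtain ⟨j, rfl⟩ := exists_eq_oplus_of_immediate hshift
  have h2n : i + ((2 * n : ℕ) : ZMod (2 * n + 2)) ∈ oplus n _ j :=
    (hγ₂ _).mpr (Or.inl ((val_sub_eq_iff_eq_add (by omega)).mpr rfl))
  refine ⟨tightSet n (b + 2), _, fun h => ?_, commonNbrs_eq (by omega) hγ₂ (hβ.oplus j),
    isStable_tightSet _, ⟨b + 2, rfl⟩, fun c hc a' ha' => ?_,
    outerNbr_tightSet_add_two (by omega) hab, hβ.oplus j, fun h => hβl h.of_oplus, hshift⟩
  · rw [← h, mem_tightSet_add_two_iff i, (val_sub_eq_iff_eq_add (by omega)).mpr rfl] at h2n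
    omega
  · rw [(mem_tightSet_iff.mp hc).1, (mem_tightSet_iff.mp ha').1, parity_add_two]
    exact parity_ne_of_val_sub_mod_two hb_odd
end
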